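/- For ν ∈ ℕ and real m ≥ 1, define the 1-periodic function h_{ν,m} by h_{ν,m}(t) = t^ν for 0 ≤ t ≤ 1 − 1/m and h_{ν,m}(t) = m(1 − 1/m)^ν (1 − t) for 1 − 1/m ≤ t < 1. Then the Fourier coefficients ĥ_{ν,m}(μ) = ∫_0^1 h_{ν,m}(t) e^{-2πiμt} dt satisfy ∑_{μ∈ℤ} |ĥ_{ν,m}(μ)| ≤ C·ln(mν + 1) for an absolute constant C. -/

import Mathlib

/-- The 1-periodic function `h_{ν,m}` from the paper. -/
noncomputable def hfun (ν : ℕ) (m : ℝ) (t : ℝ) : ℝ :=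
  if Int.fract t ≤ 1 - 1 / m then (Int.fract t) ^ ν
  else m * (1 - 1 / m) ^ ν * (1 - Int.fract t)

/-- The `μ`-th Fourier coefficient of `h_{ν,m}`. -/
noncomputable def hfunHat (ν : ℕ) (m : ℝ) (μ : ℤ) : ℂ :=
  ∫ t in (0:ℝ)..1,
    (hfun ν m t : ℂ) * Complex.exp (-(2 * Real.pi * Complex.I * (μ : ℂ) * (t : ℂ)))

/-!
For `μ ≠ 0` put `c = -2πiμ` and `a = 1 - 1/m`. Integrating by parts on `[0, a]` and on `[a, 1]`,
the boundary terms at `a` cancel because `h` is continuous there (`m (1 - a) = 1`), leaving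
`ĥ(μ) = -(ν/c) ∫₀ᵃ t^(ν-1) e^(ct) dt + m a^ν (1 - e^(ca)) / c²`.
Bounding the integral by `1/ν` and `|1 - e^(ca)| = |e^c - e^(ca)|` by `|c|/m` gives
`|ĥ(μ)| ≤ 1/|μ|`; one more integration by parts and `|1 - e^(ca)| ≤ 2` give
`|ĥ(μ)| ≤ (m + ν)/μ²`. Summing `min (1/|μ|) ((m + ν)/μ²)` over `μ` is a harmonic sum up to
`|μ| ≈ m + ν` plus a convergent tail, i.e. `O(log (m + ν)) = O(log (mν + 1))`.
-/

open Complex MeasureTheory intervalIntegral Set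
open scoped Real

lemma hasDerivAt_cexp_mul_ofReal (c : ℂ) (t : ℝ) :
    HasDerivAt (fun t : ℝ => exp (c * t)) (c * exp (c * t)) t := by
  simpa [mul_comm] using (((hasDerivAt_id (t : ℂ)).const_mul c).cexp).comp_ofReal

section CexpMul

variable {c : ℂ}

lemma norm_cexp_mul_ofReal (hc : c.re = 0) (t : ℝ) : ‖exp (c * t)‖ = 1 := by
  simp [norm_exp, hc]

lemma norm_cexp_mul_sub_cexp_mul_le (hc : c.re = 0) (a b : ℝ) :
    ‖exp (c * b) - exp (c * a)‖ ≤ ‖c‖ * |b - a| := by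
  have hsplit : c * b = c * a + I * ↑(c.im * (b - a)) := by
    apply Complex.ext <;> simp [hc]
    ring
  rw [hsplit, exp_add, ← mul_sub_one, norm_mul, norm_cexp_mul_ofReal hc, one_mul]
  calc _ ≤ ‖c.im * (b - a)‖ := Real.norm_exp_I_mul_ofReal_sub_one_le
    _ ≤ ‖c‖ * |b - a| := by
      rw [norm_mul, Real.norm_eq_abs, Real.norm_eq_abs]
      gcongr
      exact abs_im_le_norm c

lemma integral_mul_cexp_mul (hc : c ≠ 0) {f f' : ℝ → ℂ} {a b : ℝ}
    (hf : ∀ t ∈ uIcc a b, HasDerivAt f (f' t) t) (hf' : IntervalIntegrable f' volume a b) :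
    ∫ t in a..b, f t * exp (c * t) =
      (f b * exp (c * b) - f a * exp (c * a)) / c - c⁻¹ * ∫ t in a..b, f' t * exp (c * t) := by
  have hprim : ∀ t ∈ uIcc a b, HasDerivAt (fun t : ℝ => exp (c * t) / c) (exp (c * t)) t :=
    fun t _ => by simpa [mul_div_cancel_left₀ _ hc] using
      (hasDerivAt_cexp_mul_ofReal c t).div_const c
  rw [integral_mul_deriv_eq_deriv_mul hf hprim hf'
    ((continuous_exp.comp (continuous_const.mul continuous_ofReal)).intervalIntegrable a b),
    ← intervalIntegral.integral_const_mul]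
  simp only [div_eq_mul_inv, mul_left_comm c⁻¹, mul_comm c⁻¹]
  ring

lemma integral_pow_succ_mul_cexp_mul (hc : c ≠ 0) (k : ℕ) (a : ℝ) :
    ∫ t in (0:ℝ)..a, (t : ℂ) ^ (k + 1) * exp (c * t) =
      (a : ℂ) ^ (k + 1) * exp (c * a) / c
        - (k + 1) / c * ∫ t in (0:ℝ)..a, (t : ℂ) ^ k * exp (c * t) := by
  rw [integral_mul_cexp_mul hc (f' := fun t : ℝ => (k + 1) * (t : ℂ) ^ k)
    (fun t _ => by simpa using (hasDerivAt_pow (k + 1) (t : ℂ)).comp_ofReal)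
    ((continuous_const.mul (continuous_ofReal.pow k)).intervalIntegrable 0 a)]
  simp_rw [mul_assoc, intervalIntegral.integral_const_mul]
  simp
  ring

lemma norm_integral_pow_mul_cexp_mul_le (hc : c.re = 0) (k : ℕ) {a : ℝ} (ha₀ : 0 ≤ a)
    (ha₁ : a ≤ 1) :
    ‖∫ t in (0:ℝ)..a, (t : ℂ) ^ k * exp (c * t)‖ ≤ 1 / (k + 1) := by
  calc _ ≤ ∫ t in (0:ℝ)..a, t ^ k := by
        refine norm_integral_le_of_norm_le ha₀ (Filter.Eventually.of_forall fun t ht => ?_)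
          ((continuous_pow k).intervalIntegrable 0 a)
        rw [norm_mul, norm_cexp_mul_ofReal hc, mul_one, norm_pow, norm_real, Real.norm_eq_abs,
          abs_of_pos ht.1]
    _ = a ^ (k + 1) / (k + 1) := by simp [integral_pow]
    _ ≤ 1 / (k + 1) := by gcongr; exact pow_le_one₀ ha₀ ha₁

lemma norm_integral_pow_mul_cexp_mul_le_div (hc : c.re = 0) (hc₀ : c ≠ 0) (k : ℕ) {a : ℝ}
    (ha₀ : 0 ≤ a) (ha₁ : a ≤ 1) :
    ‖∫ t in (0:ℝ)..a, (t : ℂ) ^ k * exp (c * t)‖ ≤ 2 / ‖c‖ := by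
  have hc' : 0 < ‖c‖ := norm_pos_iff.mpr hc₀
  cases k with
  | zero =>
    simp only [pow_zero, one_mul, integral_exp_mul_complex hc₀, norm_div]
    gcongr
    calc _ ≤ ‖exp (c * a)‖ + ‖exp (c * (0:ℝ))‖ := norm_sub_le _ _
      _ = 2 := by rw [norm_cexp_mul_ofReal hc, norm_cexp_mul_ofReal hc]; norm_num
  | succ k =>
    rw [integral_pow_succ_mul_cexp_mul hc₀]
    have hboundary : ‖(a : ℂ) ^ (k + 1) * exp (c * a) / c‖ ≤ 1 / ‖c‖ := by
      rw [norm_div, norm_mul, norm_cexp_mul_ofReal hc, mul_one, norm_pow, norm_real,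
        Real.norm_eq_abs, abs_of_nonneg ha₀]
      gcongr
      exact pow_le_one₀ ha₀ ha₁
    have hrest : ‖(k + 1) / c * ∫ t in (0:ℝ)..a, (t : ℂ) ^ k * exp (c * t)‖ ≤ 1 / ‖c‖ := by
      rw [norm_mul, norm_div, show ‖(k : ℂ) + 1‖ = k + 1 by norm_cast]
      calc _ ≤ (k + 1) / ‖c‖ * (1 / (k + 1)) := by
            gcongr; exact norm_integral_pow_mul_cexp_mul_le hc k ha₀ ha₁
        _ = 1 / ‖c‖ := by field_simp
    calc _ ≤ _ := norm_sub_le _ _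
      _ ≤ 1 / ‖c‖ + 1 / ‖c‖ := add_le_add hboundary hrest
      _ = 2 / ‖c‖ := by ring

end CexpMul

section Hfun

variable {m : ℝ}

lemma one_sub_inv_mem_Ico (hm : 1 ≤ m) : 1 - 1 / m ∈ Ico (0 : ℝ) 1 := by
  have hm₀ : 0 < m := by linarith
  constructor
  · rw [sub_nonneg, div_le_one hm₀]; exact hm
  · simp [hm₀]

lemma hfun_of_le (ν : ℕ) {t : ℝ} (ht₀ : 0 ≤ t) (ht : t ≤ 1 - 1 / m) (hm : 1 ≤ m) :
    hfun ν m t = t ^ ν := by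
  have ht₁ : t < 1 := ht.trans_lt (one_sub_inv_mem_Ico hm).2
  rw [hfun, Int.fract_eq_self.mpr ⟨ht₀, ht₁⟩, if_pos ht]

lemma hfun_succ_of_ge (n : ℕ) {t : ℝ} (ht : 1 - 1 / m ≤ t) (ht₁ : t ≤ 1) (hm : 1 ≤ m) :
    hfun (n + 1) m t = m * (1 - 1 / m) ^ (n + 1) * (1 - t) := by
  have ha := one_sub_inv_mem_Ico hm
  have hma : m * (1 - (1 - 1 / m)) = 1 := by field_simp; ring
  rcases ht₁.eq_or_lt with rfl | ht₁
  · rw [hfun, Int.fract_one, if_pos ha.1]; simp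
  rw [hfun, Int.fract_eq_self.mpr ⟨ha.1.trans ht, ht₁⟩]
  split_ifs with h
  · obtain rfl : t = 1 - 1 / m := le_antisymm h ht
    linear_combination (-(1 - 1 / m) ^ (n + 1)) * hma
  · rfl

lemma abs_hfun_le_one (ν : ℕ) (hm : 1 ≤ m) (t : ℝ) : |hfun ν m t| ≤ 1 := by
  have hm₀ : 0 < m := by linarith
  have ha := one_sub_inv_mem_Ico hm
  have hx₀ := Int.fract_nonneg t
  have hx₁ := Int.fract_lt_one t
  rw [hfun]
  split_ifs with h
  · rw [abs_of_nonneg (by positivity)]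
    exact pow_le_one₀ hx₀ hx₁.le
  · rw [abs_of_nonneg (mul_nonneg (by have := ha.1; positivity) (by linarith))]
    calc m * (1 - 1 / m) ^ ν * (1 - Int.fract t) ≤ m * 1 * (1 / m) := by
          gcongr
          · exact pow_le_one₀ ha.1 ha.2.le
          · linarith
      _ = 1 := by field_simp

lemma norm_hfunHat_zero_le (ν : ℕ) (hm : 1 ≤ m) : ‖hfunHat ν m 0‖ ≤ 1 := by
  simpa [hfunHat] using norm_integral_le_of_norm_le_const (a := 0) (b := 1) (C := 1)
    (f := fun t : ℝ => (hfun ν m t : ℂ)) fun t _ => by simpa using abs_hfun_le_one ν hm t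

end Hfun

noncomputable def freq (μ : ℤ) : ℂ := -(2 * π * I * μ)

lemma freq_re (μ : ℤ) : (freq μ).re = 0 := by simp [freq]

lemma norm_freq (μ : ℤ) : ‖freq μ‖ = 2 * π * |(μ : ℝ)| := by
  simp [freq, abs_of_pos Real.pi_pos, mul_assoc]

lemma freq_ne_zero {μ : ℤ} (hμ : μ ≠ 0) : freq μ ≠ 0 := by
  simp [freq, Real.pi_ne_zero, hμ]

lemma cexp_freq_mul_one (μ : ℤ) : exp (freq μ * (1 : ℝ)) = 1 := by
  rw [ofReal_one, mul_one, freq, ← mul_neg, mul_comm, ← Int.cast_neg]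
  exact exp_int_mul_two_pi_mul_I _

section HfunHat

variable {m : ℝ}

lemma hfunHat_succ_eq_integral_add (n : ℕ) (hm : 1 ≤ m) (μ : ℤ) :
    hfunHat (n + 1) m μ =
      (∫ t in (0:ℝ)..(1 - 1 / m), (t : ℂ) ^ (n + 1) * exp (freq μ * t)) +
        ((m * (1 - 1 / m) ^ (n + 1) : ℝ) : ℂ) *
          ∫ t in (1 - 1 / m)..1, (1 - (t : ℂ)) * exp (freq μ * t) := by
  obtain ⟨ha₀, ha₁⟩ := one_sub_inv_mem_Ico hm
  set F : ℝ → ℂ := fun t => (hfun (n + 1) m t : ℂ) * exp (freq μ * t)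
  have hF : hfunHat (n + 1) m μ = ∫ t in (0:ℝ)..1, F t := by
    simp only [hfunHat, F, freq, neg_mul]
  have hleft : EqOn F (fun t => (t : ℂ) ^ (n + 1) * exp (freq μ * t)) (uIcc 0 (1 - 1 / m)) := by
    intro t ht
    rw [uIcc_of_le ha₀] at ht
    simp [F, hfun_of_le (n + 1) ht.1 ht.2 hm]
  have hright : EqOn F (fun t => ((m * (1 - 1 / m) ^ (n + 1) : ℝ) : ℂ) *
      ((1 - (t : ℂ)) * exp (freq μ * t))) (uIcc (1 - 1 / m) 1) := by
    intro t ht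
    rw [uIcc_of_le ha₁.le] at ht
    simp only [F, hfun_succ_of_ge n ht.1 ht.2 hm]
    push_cast
    ring
  have hFleft : IntervalIntegrable F volume 0 (1 - 1 / m) :=
    ((by fun_prop : Continuous fun t : ℝ => (t : ℂ) ^ (n + 1) * exp (freq μ * t)).intervalIntegrable
      _ _).congr (hleft.symm.mono uIoc_subset_uIcc)
  have hFright : IntervalIntegrable F volume (1 - 1 / m) 1 :=
    ((by fun_prop : Continuous fun t : ℝ => ((m * (1 - 1 / m) ^ (n + 1) : ℝ) : ℂ) *
      ((1 - (t : ℂ)) * exp (freq μ * t))).intervalIntegrable _ _).congr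
      (hright.symm.mono uIoc_subset_uIcc)
  rw [hF, ← integral_add_adjacent_intervals hFleft hFright,
    integral_congr hleft, integral_congr hright, intervalIntegral.integral_const_mul]

lemma hfunHat_succ_eq (n : ℕ) (hm : 1 ≤ m) {μ : ℤ} (hμ : μ ≠ 0) :
    hfunHat (n + 1) m μ =
      -((n + 1) / freq μ) * (∫ t in (0:ℝ)..(1 - 1 / m), (t : ℂ) ^ n * exp (freq μ * t)) +
        ((m * (1 - 1 / m) ^ (n + 1) : ℝ) : ℂ) * (1 - exp (freq μ * (1 - 1 / m : ℝ))) /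
          freq μ ^ 2 := by
  have hc := freq_ne_zero hμ
  have hm₀ : (m : ℂ) ≠ 0 := by norm_cast; linarith
  have hma : (m : ℂ) * (1 - ((1 - 1 / m : ℝ) : ℂ)) = 1 := by push_cast; field_simp; ring
  rw [hfunHat_succ_eq_integral_add n hm, integral_pow_succ_mul_cexp_mul hc,
    integral_mul_cexp_mul hc (f := fun t => 1 - (t : ℂ)) (f' := fun _ => -1)
      (fun t _ => by simpa using (hasDerivAt_id (t : ℂ)).comp_ofReal.const_sub 1)
      intervalIntegrable_const]
  simp only [neg_one_mul, intervalIntegral.integral_neg, integral_exp_mul_complex hc,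
    cexp_freq_mul_one]
  rw [ofReal_mul, ofReal_pow, ofReal_one]
  linear_combination (-(((1 - 1 / m : ℝ) : ℂ) ^ (n + 1) * exp (freq μ * (1 - 1 / m : ℝ)) /
    freq μ)) * hma

lemma norm_hfunHat_succ_le_add (n : ℕ) (hm : 1 ≤ m) {μ : ℤ} (hμ : μ ≠ 0) :
    ‖hfunHat (n + 1) m μ‖ ≤
      (n + 1) / ‖freq μ‖ * ‖∫ t in (0:ℝ)..(1 - 1 / m), (t : ℂ) ^ n * exp (freq μ * t)‖ +
        m * ‖1 - exp (freq μ * (1 - 1 / m : ℝ))‖ / ‖freq μ‖ ^ 2 := by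
  obtain ⟨ha₀, ha₁⟩ := one_sub_inv_mem_Ico hm
  rw [hfunHat_succ_eq n hm hμ]
  refine (norm_add_le _ _).trans (add_le_add (le_of_eq ?_) ?_)
  · rw [norm_mul, norm_neg, norm_div, show ‖(n : ℂ) + 1‖ = n + 1 by norm_cast]
  · rw [norm_div, norm_mul, norm_real, Real.norm_of_nonneg (by positivity), norm_pow]
    gcongr
    exact mul_le_of_le_one_right (by linarith) (pow_le_one₀ ha₀ ha₁.le)

lemma norm_one_sub_cexp_freq_le (hm : 1 ≤ m) (μ : ℤ) :
    ‖1 - exp (freq μ * (1 - 1 / m : ℝ))‖ ≤ ‖freq μ‖ / m := by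
  have hm₀ : 0 < m := by linarith
  calc _ = ‖exp (freq μ * (1 : ℝ)) - exp (freq μ * (1 - 1 / m : ℝ))‖ := by
        rw [cexp_freq_mul_one]
    _ ≤ ‖freq μ‖ * |1 - (1 - 1 / m)| := norm_cexp_mul_sub_cexp_mul_le (freq_re μ) _ _
    _ = ‖freq μ‖ / m := by rw [sub_sub_cancel, abs_of_pos (by positivity)]; ring

lemma norm_hfunHat_succ_le_inv (n : ℕ) (hm : 1 ≤ m) {μ : ℤ} (hμ : μ ≠ 0) :
    ‖hfunHat (n + 1) m μ‖ ≤ 1 / |(μ : ℝ)| := by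
  obtain ⟨ha₀, ha₁⟩ := one_sub_inv_mem_Ico hm
  have hc : 0 < ‖freq μ‖ := norm_pos_iff.mpr (freq_ne_zero hμ)
  calc _ ≤ (n + 1) / ‖freq μ‖ * (1 / (n + 1)) + m * (‖freq μ‖ / m) / ‖freq μ‖ ^ 2 := by
        refine (norm_hfunHat_succ_le_add n hm hμ).trans ?_
        gcongr
        · exact norm_integral_pow_mul_cexp_mul_le (freq_re μ) n ha₀ ha₁.le
        · exact norm_one_sub_cexp_freq_le hm μ
    _ = 2 / ‖freq μ‖ := by field_simp; ring
    _ ≤ 1 / |(μ : ℝ)| := by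
        have hμ₀ : 0 < |(μ : ℝ)| := by positivity
        rw [norm_freq, div_le_div_iff₀ (by positivity) hμ₀]
        nlinarith [Real.pi_gt_three]

lemma norm_hfunHat_succ_le_div_sq (n : ℕ) (hm : 1 ≤ m) {μ : ℤ} (hμ : μ ≠ 0) :
    ‖hfunHat (n + 1) m μ‖ ≤ (m + (n + 1)) / (μ : ℝ) ^ 2 := by
  obtain ⟨ha₀, ha₁⟩ := one_sub_inv_mem_Ico hm
  have hone_sub : ‖1 - exp (freq μ * (1 - 1 / m : ℝ))‖ ≤ 2 :=
    (norm_sub_le _ _).trans (by rw [norm_one, norm_cexp_mul_ofReal (freq_re μ)]; norm_num)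
  calc _ ≤ (n + 1) / ‖freq μ‖ * (2 / ‖freq μ‖) + m * 2 / ‖freq μ‖ ^ 2 := by
        refine (norm_hfunHat_succ_le_add n hm hμ).trans ?_
        gcongr
        exact norm_integral_pow_mul_cexp_mul_le_div (freq_re μ) (freq_ne_zero hμ) n ha₀ ha₁.le
    _ = 2 * (m + (n + 1)) / ‖freq μ‖ ^ 2 := by ring
    _ ≤ (m + (n + 1)) / (μ : ℝ) ^ 2 := by
        have hμ₀ : 0 < (μ : ℝ) ^ 2 := by positivity
        have hπ : 2 ≤ 2 ^ 2 * π ^ 2 := by nlinarith [Real.pi_gt_three]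
        rw [norm_freq, mul_pow, mul_pow, sq_abs, div_le_div_iff₀ (by positivity) hμ₀]
        have hmn : 0 ≤ m + (n + 1) := by positivity
        nlinarith [mul_le_mul_of_nonneg_left hπ (mul_nonneg hmn hμ₀.le)]

end HfunHat

section Series

variable {V : ℝ}

lemma summable_min_inv_div_sq (hV : 0 ≤ V) :
    Summable fun n : ℕ => min (1 / ((n : ℝ) + 1)) (V / ((n : ℝ) + 1) ^ 2) := by
  have hsq : Summable fun n : ℕ => V * (1 / ((n : ℝ) + 1) ^ 2) := by
    refine ((summable_nat_add_iff 1).mpr (Real.summable_one_div_nat_pow.mpr one_lt_two)).mul_left V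
      |>.congr fun n => ?_
    push_cast; rfl
  exact hsq.of_nonneg_of_le (fun n => by positivity)
    fun n => (min_le_right _ _).trans (by rw [mul_one_div])

lemma tsum_min_inv_div_sq_le (hV : 0 < V) :
    ∑' n : ℕ, min (1 / ((n : ℝ) + 1)) (V / ((n : ℝ) + 1) ^ 2) ≤ 2 + Real.log (V + 1) := by
  set b : ℕ → ℝ := fun n => min (1 / ((n : ℝ) + 1)) (V / ((n : ℝ) + 1) ^ 2)
  set N := ⌈V⌉₊
  have hVN : V ≤ N := Nat.le_ceil V
  have hN : (0 : ℝ) < N := hV.trans_le hVN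
  have hhead : ∑ i ∈ Finset.range N, b i ≤ 1 + Real.log (V + 1) :=
    calc ∑ i ∈ Finset.range N, b i ≤ ∑ i ∈ Finset.range N, 1 / ((i : ℝ) + 1) :=
          Finset.sum_le_sum fun i _ => min_le_left _ _
      _ = harmonic N := by simp [harmonic]
      _ ≤ 1 + Real.log N := harmonic_le_one_add_log N
      _ ≤ 1 + Real.log (V + 1) := by
          gcongr; exact (Nat.ceil_lt_add_one hV.le).le
  have htail : ∑' n : ℕ, b (n + N) ≤ 1 := by
    set g : ℕ → ℝ := fun n => V / ((n : ℝ) + N)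
    have hstep : ∀ n : ℕ, b (n + N) ≤ g n - g (n + 1) := by
      intro n
      have hk : (0 : ℝ) < n + N := by positivity
      calc b (n + N) ≤ V / ((n : ℝ) + N + 1) ^ 2 := by
            refine (min_le_right _ _).trans_eq ?_; push_cast; rfl
        _ ≤ V / (((n : ℝ) + N) * ((n : ℝ) + N + 1)) := by gcongr; nlinarith
        _ = g n - g (n + 1) := by simp only [g]; push_cast; field_simp; ring
    refine Real.tsum_le_of_sum_range_le (fun n => by positivity) fun K => ?_
    calc ∑ n ∈ Finset.range K, b (n + N) ≤ ∑ n ∈ Finset.range K, (g n - g (n + 1)) :=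
          Finset.sum_le_sum fun n _ => hstep n
      _ = g 0 - g K := Finset.sum_range_sub' g K
      _ ≤ g 0 := sub_le_self _ (by positivity)
      _ ≤ 1 := by simpa [g, div_le_one hN] using hVN
  rw [← (summable_min_inv_div_sq hV.le).sum_add_tsum_nat_add N]
  linarith

lemma tsum_norm_le_of_le_min {E : Type*} [NormedAddCommGroup E] {f : ℤ → E} (hV : 0 < V)
    (h₀ : ‖f 0‖ ≤ 1) (hf : ∀ μ ≠ 0, ‖f μ‖ ≤ min (1 / |(μ : ℝ)|) (V / (μ : ℝ) ^ 2)) :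
    ∑' μ, ‖f μ‖ ≤ 5 + 2 * Real.log (V + 1) := by
  set b : ℕ → ℝ := fun n => min (1 / ((n : ℝ) + 1)) (V / ((n : ℝ) + 1) ^ 2)
  have hb := summable_min_inv_div_sq hV.le
  have hpos : ∀ n : ℕ, ‖f (n + 1)‖ ≤ b n := fun n => by
    have h := hf (n + 1) (by omega)
    push_cast at h
    rwa [abs_of_pos (by positivity)] at h
  have hneg : ∀ n : ℕ, ‖f (-(n + 1))‖ ≤ b n := fun n => by
    have h := hf (-(n + 1)) (by omega)
    push_cast at h
    rwa [abs_neg, neg_sq, abs_of_pos (by positivity)] at h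
  have hpos_sum : Summable fun n : ℕ => ‖f (n + 1)‖ :=
    hb.of_nonneg_of_le (fun _ => norm_nonneg _) hpos
  have hneg_sum : Summable fun n : ℕ => ‖f (-(n + 1))‖ :=
    hb.of_nonneg_of_le (fun _ => norm_nonneg _) hneg
  rw [tsum_of_add_one_of_neg_add_one (f := fun μ => ‖f μ‖) hpos_sum hneg_sum]
  have := hpos_sum.tsum_le_tsum hpos hb
  have := hneg_sum.tsum_le_tsum hneg hb
  have := tsum_min_inv_div_sq_le hV
  linarith

end Series

theorem stmt_18 :
    ∃ C : ℝ, 0 < C ∧ ∀ ν : ℕ, 1 ≤ ν → ∀ m : ℝ, 1 ≤ m →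
      ∑' μ : ℤ, ‖hfunHat ν m μ‖ ≤ C * Real.log (m * ν + 1) := by
  refine ⟨12, by norm_num, fun ν hν m hm => ?_⟩
  obtain ⟨n, rfl⟩ : ∃ n, ν = n + 1 := ⟨ν - 1, by omega⟩
  have hsum := tsum_norm_le_of_le_min (V := m + (n + 1)) (by positivity)
    (norm_hfunHat_zero_le _ hm) fun μ hμ =>
      le_min (norm_hfunHat_succ_le_inv n hm hμ) (norm_hfunHat_succ_le_div_sq n hm hμ)
  have hmn : 1 ≤ m * (n + 1) := one_le_mul_of_one_le_of_one_le hm (by simp)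
  push_cast
  have hlog_two : Real.log 2 ≤ Real.log (m * (n + 1) + 1) :=
    Real.log_le_log (by norm_num) (by linarith)
  have hlogV : Real.log (m + (n + 1) + 1) ≤ Real.log 2 + Real.log (m * (n + 1) + 1) := by
    rw [← Real.log_mul (by norm_num) (by positivity)]
    exact Real.log_le_log (by positivity) (by nlinarith)
  linarith [Real.log_two_gt_d9]
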